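/- arXiv:2602.05097 — 5 statements merged into one kernel-verified Lean document; each statement's English description precedes it below -/
import Mathlib

section
/- Let F be a finite field, S a finite set, σ : S → S a bijection, and V an F-linear subspace of the space of functions S → F such that f ∘ σ ∈ V for every f ∈ V. Let P_1, …, P_s ∈ S lie in pairwise distinct σ-orbits, where the σ-orbit of P_i has cardinality exactly m_i ≥ 1 (so that σ^{m_i}(P_i) = P_i). Define the evaluation map ev : V → F^{m_1} × ⋯ × F^{m_s} by ev(f) = ((f(P_1), f(σ(P_1)), …, f(σ^{m_1−1}(P_1))), …, (f(P_s), …, f(σ^{m_s−1}(P_s)))). Then the linear code C = ev(V) satisfies T(C) = C, where T applies to the i-th block the cyclic shift (c_0, c_1, …, c_{m_i−1}) ↦ (c_{m_i−1}, c_0, …, c_{m_i−2}); that is, C is a generalized quasi-cyclic code with block lengths (m_1, …, m_s). -/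
/-- The orbit of a point `P` under a bijection `σ`, i.e. `{σ^k(P) : k ∈ ℤ}`. -/
def zorbit {S : Type*} (σ : Equiv.Perm S) (P : S) : Set S :=
  {Q | ∃ k : ℤ, (σ ^ k) P = Q}

/-- The blockwise cyclic-shift operator `T` on `F^{m_0} × ⋯ × F^{m_{s−1}}`:
on the `i`-th block it applies `(c_0, …, c_{m_i−1}) ↦ (c_{m_i−1}, c_0, …, c_{m_i−2})`. -/
def gqcShift {F : Type*} {s : ℕ} (m : Fin s → ℕ) (hm : ∀ i, 0 < m i)
    (c : (i : Fin s) → Fin (m i) → F) : (i : Fin s) → Fin (m i) → F :=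
  fun i j => c i ⟨((j : ℕ) + m i - 1) % m i, Nat.mod_lt _ (hm i)⟩

private lemma memV_pow {F S : Type*} [Field F] (σ : Equiv.Perm S)
    (V : Submodule F (S → F)) (hV : ∀ f ∈ V, (fun x => f (σ x)) ∈ V)
    (f : S → F) (hf : f ∈ V) (k : ℕ) : (fun x => f ((σ ^ k) x)) ∈ V := by
  induction k with
  | zero => simpa using hf
  | succ n ih => simpa [pow_succ, Equiv.Perm.mul_apply] using hV _ ih

private lemma pow_mod_eq {S : Type*} (σ : Equiv.Perm S) (P : S) (m : ℕ)
    (h : (σ ^ m) P = P) (a b : ℕ) (hab : a % m = b % m) :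
    (σ ^ a) P = (σ ^ b) P := by
  have key : ∀ c : ℕ, (σ ^ c) P = (σ ^ (c % m)) P := by
    intro c
    have fix : ∀ q : ℕ, ((σ ^ m) ^ q) P = P := by
      intro q
      induction q with
      | zero => simp
      | succ n ih => simp [pow_succ, Equiv.Perm.mul_apply, h, ih]
    conv_lhs => rw [← Nat.mod_add_div c m]
    rw [pow_add, pow_mul, Equiv.Perm.mul_apply, fix]
  rw [key a, key b, hab]

private lemma mod_eq1 (m j K : ℕ) (hm : 1 ≤ m) (hK : K % m = (m - 1) % m) :
    (j + m - 1) % m % m = (K + j) % m := by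
  rw [Nat.mod_mod_of_dvd _ (dvd_refl m), Nat.add_mod K j, hK, ← Nat.add_mod]
  congr 1
  omega

private lemma mod_eq2 (m j : ℕ) (hm : 1 ≤ m) (hj : j < m) :
    ((j + m - 1) % m + 1) % m = j % m := by
  rcases Nat.eq_zero_or_pos j with rfl | hj1
  · have h1 : (0 + m - 1) % m = m - 1 := by
      rw [Nat.zero_add]; exact Nat.mod_eq_of_lt (by omega)
    have h2 : m - 1 + 1 = m := by omega
    rw [h1, h2, Nat.mod_self, Nat.zero_mod]
  · have h1 : j + m - 1 = (j - 1) + m := by omega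
    rw [h1, Nat.add_mod_right, Nat.mod_eq_of_lt (by omega : j - 1 < m)]
    congr 1
    omega

theorem stmt1 {F : Type*} [Field F] [Fintype F]
    {S : Type*} [Fintype S] (σ : Equiv.Perm S) (s : ℕ) (m : Fin s → ℕ)
    (hm : ∀ i, 1 ≤ m i)
    (V : Submodule F (S → F))
    (hV : ∀ f ∈ V, (fun x => f (σ x)) ∈ V)
    (P : Fin s → S)
    (horb : ∀ i j : Fin s, i ≠ j → zorbit σ (P i) ≠ zorbit σ (P j))
    (hcard : ∀ i : Fin s, (zorbit σ (P i)).ncard = m i)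
    (hper : ∀ i : Fin s, (σ ^ (m i)) (P i) = P i)
    (C : Set ((i : Fin s) → Fin (m i) → F))
    (hC : C = {c | ∃ f ∈ V, ∀ (i : Fin s) (j : Fin (m i)),
      c i j = f ((σ ^ (j : ℕ)) (P i))}) :
    gqcShift m hm '' C = C := by
  subst hC
  set L : ℕ := ∏ i : Fin s, m i with hL
  have hLpos : 1 ≤ L := Finset.one_le_prod' (fun i _ => hm i)
  have hdvd : ∀ i, m i ∣ L := fun i => Finset.dvd_prod_of_mem m (Finset.mem_univ i)
  set K : ℕ := L - 1 with hK
  have hKmod : ∀ i, (K % m i) = (m i - 1) % m i := by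
    intro i
    obtain ⟨t, ht⟩ := hdvd i
    have ht1 : 1 ≤ t := by
      rcases Nat.eq_zero_or_pos t with h0 | h1
      · subst h0; simp at ht; omega
      · exact h1
    have h4 : m i * (t - 1) = m i * t - m i := by
      rw [Nat.mul_sub, Nat.mul_one]
    have h3 : m i * 1 ≤ m i * t := Nat.mul_le_mul_left (m i) ht1
    have h2 := hm i
    have hKe : K = m i * (t - 1) + (m i - 1) := by
      rw [hK, ht, h4]; omega
    rw [hKe, Nat.mul_add_mod]
  ext c
  constructor
  · rintro ⟨c', ⟨f, hfV, hev⟩, rfl⟩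
    refine ⟨fun x => f ((σ ^ K) x), memV_pow σ V hV f hfV K, fun i j => ?_⟩
    simp only [gqcShift]
    rw [hev i]
    simp only [← Equiv.Perm.mul_apply, ← pow_add]
    exact congrArg f (pow_mod_eq σ (P i) (m i) (hper i) _ _
      (mod_eq1 (m i) (j : ℕ) K (hm i) (hKmod i)))
  · rintro ⟨f, hfV, hev⟩
    refine ⟨fun i j => f ((σ ^ ((j : ℕ) + 1)) (P i)),
      ⟨fun x => f (σ x), hV f hfV, fun i j => ?_⟩, ?_⟩
    · show f ((σ ^ ((j : ℕ) + 1)) (P i)) = f (σ ((σ ^ (j : ℕ)) (P i)))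
      rw [← Equiv.Perm.mul_apply, ← pow_succ']
    · funext i j
      simp only [gqcShift]
      rw [hev i j]
      exact congrArg f (pow_mod_eq σ (P i) (m i) (hper i) _ _
        (mod_eq2 (m i) (j : ℕ) (hm i) j.isLt))
end

section
/- Let q be a power of a prime p with p ∉ {2, 5}, let r ≥ 1 with q^r ≡ 1 (mod 8), and let a ∈ F_{q^r} be a primitive 8-th root of unity. Let S = {(x, y) ∈ F_{q^r} × F_{q^r} : x^2 = y^5 − y}. Then the map σ(x, y) = (a x, a^2 y) is a bijection of S onto itself of order 8; its action on S has exactly two short orbits, namely the fixed point orbit {(0, 0)} of size 1 and the orbit {(0, 1), (0, a^2), (0, −1), (0, −a^2)} of size 4; and every other point of S has σ-orbit of cardinality exactly 8. -/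
/-- The orbit of a point `P` under a bijection `f`, i.e. `{f^k(P) : k ∈ ℤ}`
(for an injective `f`, `Q` lies in the orbit of `P` iff some forward iterates agree). -/
def fnOrbit {α : Type*} (f : α → α) (P : α) : Set α :=
  {Q | ∃ j k : ℕ, f^[j] P = f^[k] Q}

/-- `f` has order exactly `n`: `f^[n] = id` and `n` is minimal positive such. -/
def IsOrderOf {α : Type*} (f : α → α) (n : ℕ) : Prop :=
  f^[n] = id ∧ ∀ k : ℕ, 0 < k → f^[k] = id → n ≤ k

theorem stmt5 (p nn q r : ℕ) (hp : p.Prime) (hp2 : p ≠ 2) (hp5 : p ≠ 5)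
    (hq : q = p ^ nn) (hn : 1 ≤ nn) (hr : 1 ≤ r) (hmod : q ^ r % 8 = 1)
    {F : Type*} [Field F] [Fintype F] (hF : Fintype.card F = q ^ r)
    (a : F) (ha : orderOf a = 8)
    (S : Set (F × F)) (hS : S = {P : F × F | P.1 ^ 2 = P.2 ^ 5 - P.2})
    (σ : F × F → F × F) (hσ : σ = fun P => (a * P.1, a ^ 2 * P.2)) :
    Set.BijOn σ S S ∧
    IsOrderOf σ 8 ∧
    {O : Set (F × F) | ∃ P ∈ S, O = fnOrbit σ P ∧ O.ncard < 8}
      = {{((0 : F), (0 : F))}, {(0, 1), (0, a ^ 2), (0, -1), (0, -(a ^ 2))}} ∧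
    ({((0 : F), (0 : F))} : Set (F × F)).ncard = 1 ∧
    ({(0, 1), (0, a ^ 2), (0, -1), (0, -(a ^ 2))} : Set (F × F)).ncard = 4 ∧
    ∀ P ∈ S, P ∉ ({((0 : F), (0 : F))} : Set (F × F)) →
      P ∉ ({(0, 1), (0, a ^ 2), (0, -1), (0, -(a ^ 2))} : Set (F × F)) →
      (fnOrbit σ P).ncard = 8 := by
  classical
  subst hq hS hσ
  set σ : F × F → F × F := fun P => (a * P.1, a ^ 2 * P.2) with hσ
  have ha8 : a ^ 8 = 1 := by rw [← ha]; exact pow_orderOf_eq_one a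
  have ha0 : a ≠ 0 := by
    intro h; rw [h] at ha8; simp at ha8
  have ha4ne1 : a ^ 4 ≠ 1 := by
    intro h
    have hd := orderOf_dvd_of_pow_eq_one h
    rw [ha] at hd
    norm_num at hd
  have ha4 : a ^ 4 = -1 := by
    have h2 : (a ^ 4 - 1) * (a ^ 4 + 1) = 0 := by linear_combination ha8
    rcases mul_eq_zero.mp h2 with h | h
    · exact absurd (by linear_combination h) ha4ne1
    · linear_combination h
  have hne : (-1 : F) ≠ 1 := ha4 ▸ ha4ne1
  have ha2ne1 : a ^ 2 ≠ 1 := by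
    intro h
    have hd := orderOf_dvd_of_pow_eq_one h
    rw [ha] at hd
    norm_num at hd
  have ha2nen1 : a ^ 2 ≠ -1 := by
    intro h
    exact ha4ne1 (by rw [show (4:ℕ) = 2*2 from rfl, pow_mul, h]; ring)
  have h2ne : a ^ 2 ≠ -a ^ 2 := by
    intro h
    have h0 : a ^ 2 * (1 + 1) = 0 := by linear_combination h
    rcases mul_eq_zero.mp h0 with h' | h'
    · exact ha0 (pow_eq_zero_iff (by norm_num) |>.mp h')
    · exact hne (by linear_combination -h')
  have hone_ne_a2 : (1 : F) ≠ a ^ 2 := fun h => ha2ne1 h.symm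
  have hone_ne_n1 : (1 : F) ≠ -1 := hne.symm
  have hone_ne_na2 : (1 : F) ≠ -a ^ 2 := by
    intro h; exact ha2nen1 (by linear_combination h)
  have hn1_ne_na2 : (-1 : F) ≠ -a ^ 2 := by
    intro h; exact ha2ne1 (by linear_combination h)
  have hiter : ∀ (m : ℕ) (P : F × F), σ^[m] P = (a ^ m * P.1, a ^ (2*m) * P.2) := by
    intro m
    induction m with
    | zero => intro P; simp
    | succ n ih =>
      intro P
      rw [Function.iterate_succ_apply', ih, hσ]
      simp only [Prod.mk.injEq]
      constructor <;> ring
  have hid : σ^[8] = id := by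
    funext P
    rw [hiter]
    have h16 : a ^ (2*8) = 1 := by
      rw [show 2*8 = 8*2 from rfl, pow_mul, ha8, one_pow]
    simp [ha8, h16]
  have horb : ∀ P : F × F, fnOrbit σ P = {Q | ∃ m : ℕ, σ^[m] P = Q} := by
    intro P
    ext Q
    constructor
    · rintro ⟨j, k, h⟩
      refine ⟨7*k + j, ?_⟩
      have h1 : σ^[7*k + j] P = σ^[7*k + k] Q := by
        rw [Function.iterate_add_apply, h, ← Function.iterate_add_apply]
      rw [h1, show 7*k + k = 8*k from by ring, Function.iterate_mul, hid]
      simp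
    · rintro ⟨m, h⟩
      exact ⟨m, 0, by simpa using h⟩
  have hmod8 : ∀ (m : ℕ) (P : F × F), σ^[m] P = σ^[m % 8] P := by
    intro m P
    conv_lhs => rw [← Nat.div_add_mod m 8, Function.iterate_add_apply,
      Function.iterate_mul, hid]
    simp
  have hinj : Function.Injective σ := by
    intro P Q h
    rw [hσ] at h
    simp only [Prod.mk.injEq] at h
    have h1 := mul_left_cancel₀ ha0 h.1
    have h2 := mul_left_cancel₀ (pow_ne_zero 2 ha0) h.2
    exact Prod.ext h1 h2
  have hmaps : Set.MapsTo σ {P : F × F | P.1 ^ 2 = P.2 ^ 5 - P.2}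
      {P : F × F | P.1 ^ 2 = P.2 ^ 5 - P.2} := by
    intro P hP
    simp only [Set.mem_setOf_eq] at hP ⊢
    show (a * P.1) ^ 2 = (a ^ 2 * P.2) ^ 5 - a ^ 2 * P.2
    linear_combination a^2 * hP - a^2 * P.2^5 * ha8
  have hsurj : Set.SurjOn σ {P : F × F | P.1 ^ 2 = P.2 ^ 5 - P.2}
      {P : F × F | P.1 ^ 2 = P.2 ^ 5 - P.2} := by
    intro Q hQ
    refine ⟨σ^[7] Q, hmaps.iterate 7 hQ, ?_⟩
    have h78 : σ (σ^[7] Q) = σ^[8] Q := (Function.iterate_succ_apply' σ 7 Q).symm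
    rw [h78, hid]
    rfl
  have horder : IsOrderOf σ 8 := by
    refine ⟨hid, fun k hk hkid => ?_⟩
    have h1 : σ^[k] ((1:F), (1:F)) = (1, 1) := by rw [hkid]; rfl
    rw [hiter] at h1
    simp only [mul_one, Prod.mk.injEq] at h1
    have hd := orderOf_dvd_of_pow_eq_one h1.1
    rw [ha] at hd
    exact Nat.le_of_dvd hk hd
  have horb0 : fnOrbit σ ((0:F), (0:F)) = {((0:F), (0:F))} := by
    rw [horb]
    ext Q
    simp only [Set.mem_setOf_eq, Set.mem_singleton_iff]
    constructor
    · rintro ⟨m, rfl⟩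
      rw [hiter]
      simp
    · rintro rfl
      exact ⟨0, rfl⟩
  have hkey : ∀ z : F, z ^ 4 = 1 ↔ (z = 1 ∨ z = a ^ 2 ∨ z = -1 ∨ z = -a ^ 2) := by
    intro z
    constructor
    · intro h
      have h0 : (z - 1) * (z + 1) * ((z - a ^ 2) * (z + a ^ 2)) = 0 := by
        linear_combination h + (1 - z^2) * ha4
      rcases mul_eq_zero.mp h0 with h1 | h1
      · rcases mul_eq_zero.mp h1 with h2 | h2
        · exact Or.inl (by linear_combination h2)
        · exact Or.inr (Or.inr (Or.inl (by linear_combination h2)))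
      · rcases mul_eq_zero.mp h1 with h2 | h2
        · exact Or.inr (Or.inl (by linear_combination h2))
        · exact Or.inr (Or.inr (Or.inr (by linear_combination h2)))
    · rintro (rfl | rfl | rfl | rfl)
      · norm_num
      · linear_combination ha8
      · norm_num
      · linear_combination ha8
  have horb4 : ∀ y : F, y ^ 4 = 1 → fnOrbit σ ((0:F), y) =
      {((0:F), (1:F)), (0, a ^ 2), (0, -1), (0, -(a ^ 2))} := by
    intro y hy
    have hrep : ∃ s : ℕ, s ≤ 3 ∧ y = a ^ (2*s) := by
      rcases (hkey y).mp hy with rfl | rfl | rfl | rfl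
      · exact ⟨0, by norm_num⟩
      · exact ⟨1, by norm_num⟩
      · exact ⟨2, by norm_num, by rw [show 2*2 = 4 from rfl, ha4]⟩
      · exact ⟨3, by norm_num, by rw [show 2*3 = 4+2 from rfl, pow_add, ha4]; ring⟩
    obtain ⟨s, hs3, rfl⟩ := hrep
    have hex : ∀ t : ℕ, ∃ m : ℕ, σ^[m] ((0:F), a ^ (2*s)) = (0, a ^ (2*t)) := by
      intro t
      refine ⟨t + 4 - s, ?_⟩
      rw [hiter]
      simp only [mul_zero]
      rw [← pow_add]
      have he : 2*(t + 4 - s) + 2*s = 2*t + 8 := by omega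
      rw [he, pow_add, ha8, mul_one]
    rw [horb]
    ext Q
    simp only [Set.mem_setOf_eq, Set.mem_insert_iff, Set.mem_singleton_iff]
    constructor
    · rintro ⟨m, rfl⟩
      rw [hiter]
      simp only [mul_zero]
      have hz : (a ^ (2*m) * a ^ (2*s)) ^ 4 = 1 := by
        rw [← pow_add, ← pow_mul, show (2*m + 2*s)*4 = 8*(m+s) from by ring,
          pow_mul, ha8, one_pow]
      rcases (hkey _).mp hz with h | h | h | h <;> simp [h]
    · rintro (rfl | rfl | rfl | rfl)
      · obtain ⟨m, hm⟩ := hex 0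
        exact ⟨m, by simpa using hm⟩
      · obtain ⟨m, hm⟩ := hex 1
        exact ⟨m, by simpa using hm⟩
      · obtain ⟨m, hm⟩ := hex 2
        refine ⟨m, ?_⟩
        rw [hm, show 2*2 = 4 from rfl, ha4]
      · obtain ⟨m, hm⟩ := hex 3
        refine ⟨m, ?_⟩
        rw [hm, show 2*3 = 4+2 from rfl, pow_add, ha4]
        simp
  have h4card : ({((0:F), (1:F)), (0, a ^ 2), (0, -1), (0, -(a ^ 2))} :
      Set (F × F)).ncard = 4 := by
    have h1 : ((0:F), (1:F)) ∉ ({(0, a ^ 2), (0, -1), (0, -(a ^ 2))} : Set (F × F)) := by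
      simp only [Set.mem_insert_iff, Set.mem_singleton_iff, Prod.mk.injEq, true_and]
      push_neg
      exact ⟨hone_ne_a2, hone_ne_n1, hone_ne_na2⟩
    have h2 : ((0:F), a ^ 2) ∉ ({((0:F), -1), (0, -(a ^ 2))} : Set (F × F)) := by
      simp only [Set.mem_insert_iff, Set.mem_singleton_iff, Prod.mk.injEq, true_and]
      push_neg
      exact ⟨ha2nen1, h2ne⟩
    have h3 : ((0:F), (-1:F)) ∉ ({((0:F), -(a ^ 2))} : Set (F × F)) := by
      simp only [Set.mem_singleton_iff, Prod.mk.injEq, true_and]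
      exact hn1_ne_na2
    rw [Set.ncard_insert_of_notMem h1 (Set.toFinite _),
      Set.ncard_insert_of_notMem h2 (Set.toFinite _),
      Set.ncard_insert_of_notMem h3 (Set.toFinite _),
      Set.ncard_singleton]
  have horb8 : ∀ P : F × F, P.1 ≠ 0 → (fnOrbit σ P).ncard = 8 := by
    intro P hP1
    have himg : fnOrbit σ P = ↑((Finset.range 8).image (fun m => σ^[m] P)) := by
      rw [horb]
      ext Q
      simp only [Set.mem_setOf_eq, Finset.coe_image, Set.mem_image, Finset.mem_coe,
        Finset.mem_range]
      constructor
      · rintro ⟨m, rfl⟩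
        exact ⟨m % 8, Nat.mod_lt m (by norm_num), (hmod8 m P).symm⟩
      · rintro ⟨m, _, h⟩
        exact ⟨m, h⟩
    have haux : ∀ j k : ℕ, j < k → k < 8 → σ^[j] P ≠ σ^[k] P := by
      intro j k hjk hk8 heq
      rw [show k = j + (k - j) from by omega, Function.iterate_add_apply] at heq
      have heq2 : P = σ^[k - j] P := (hinj.iterate j) heq
      have hfst := congrArg Prod.fst heq2
      rw [hiter] at hfst
      simp only at hfst
      have h0 : (a ^ (k - j) - 1) * P.1 = 0 := by linear_combination -hfst
      rcases mul_eq_zero.mp h0 with h | h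
      · have hd := orderOf_dvd_of_pow_eq_one (show a ^ (k - j) = 1 from by
          linear_combination h)
        rw [ha] at hd
        have := Nat.le_of_dvd (by omega) hd
        omega
      · exact hP1 h
    rw [himg, Set.ncard_coe_finset,
      Finset.card_image_of_injOn, Finset.card_range]
    intro j hj k hk hjk
    simp only [Finset.coe_range, Set.mem_Iio] at hj hk
    rcases lt_trichotomy j k with h | h | h
    · exact absurd hjk (haux j k h hk)
    · exact h
    · exact absurd hjk.symm (haux k j h hj)
  have hx0 : ∀ P : F × F, P ∈ {P : F × F | P.1 ^ 2 = P.2 ^ 5 - P.2} → P.1 = 0 →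
      P = ((0:F), (0:F)) ∨
        P ∈ ({((0:F), (1:F)), (0, a ^ 2), (0, -1), (0, -(a ^ 2))} : Set (F × F)) := by
    intro P hP h1
    simp only [Set.mem_setOf_eq] at hP
    have h5 : P.2 * (P.2 ^ 4 - 1) = 0 := by
      rw [h1] at hP
      linear_combination -hP
    have hPe : P = ((0:F), P.2) := by rw [← h1]
    rcases mul_eq_zero.mp h5 with h2 | h2
    · left
      rw [hPe, h2]
    · right
      have hy4 : P.2 ^ 4 = 1 := by linear_combination h2
      rw [hPe]
      rcases (hkey P.2).mp hy4 with h | h | h | h <;> simp [h]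
  refine ⟨⟨hmaps, hinj.injOn, hsurj⟩, horder, ?_, Set.ncard_singleton _, h4card, ?_⟩
  · ext O
    simp only [Set.mem_setOf_eq, Set.mem_insert_iff, Set.mem_singleton_iff]
    constructor
    · rintro ⟨P, hP, rfl, hcard⟩
      by_cases h1 : P.1 = 0
      · rcases hx0 P hP h1 with h | h
        · left
          rw [h, horb0]
        · right
          have hPe : P = ((0:F), P.2) := by rw [← h1]
          rw [hPe] at h
          simp only [Set.mem_insert_iff, Set.mem_singleton_iff, Prod.mk.injEq,
            true_and] at h
          have hy4 : P.2 ^ 4 = 1 := (hkey P.2).mpr (by tauto)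
          rw [hPe, horb4 P.2 hy4]
      · rw [horb8 P h1] at hcard
        omega
    · rintro (rfl | rfl)
      · exact ⟨((0:F), (0:F)), by simp, horb0.symm, by simp [Set.ncard_singleton]⟩
      · refine ⟨((0:F), (1:F)), by norm_num [Set.mem_setOf_eq], (horb4 1 (one_pow 4)).symm, ?_⟩
        rw [h4card]
        norm_num
  · intro P hP hn0 hnT
    by_cases h1 : P.1 = 0
    · rcases hx0 P hP h1 with h | h
      · exact absurd (by rw [h]; exact Set.mem_singleton _) hn0
      · exact absurd h hnT
    · exact horb8 P h1
end

section
/- Let q be an odd prime power and g ≥ 1 an integer such that 2g + 1 divides q + 1. Then the affine curve x^2 = y^{2g+1} + 1 has exactly q^2 + 2gq points over F_{q^2}, i.e., #{(x, y) ∈ F_{q^2} × F_{q^2} : x^2 = y^{2g+1} + 1} = q^2 + 2gq. -/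
/-!
Write `q = p ^ n`, `m = 2g + 1`, `𝔽q ⊆ F` for the fixed field of `x ↦ x ^ q` and `χ` for the
quadratic character of `F`; the number of points is `q² + ∑_y χ(y^m + 1)`. Every element of `𝔽qˣ`
is a square in `F`, and for `c ∉ 𝔽q` the map `(a, b) ↦ a + b c` is a bijection `𝔽q² → F`; hence
the line sum `∑_{a ∈ 𝔽q} χ(c + a)` is `q - 1` for `c ∈ 𝔽q` and `-1` otherwise. Since `m` is prime
to `q - 1`, `v ↦ v^m` permutes `𝔽qˣ`, so averaging over the cosets `y 𝔽qˣ` turns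
`(q - 1) ∑_{y ≠ 0} χ(y^m + 1)` into `∑_{y ≠ 0} (∑_{a ∈ 𝔽q} χ(y^m + a) - χ(y))`. This equals
`q · #{y | y^m ∈ 𝔽q} - (q² - 1)`, and `#{y | y^m ∈ 𝔽q} = m (q - 1)` because `m (q - 1) ∣ q² - 1`
and `Fˣ` is cyclic.
-/

open Finset

theorem IsCyclic.card_pow_eq_one_of_dvd {G : Type*} [Group G] [Fintype G] [DecidableEq G]
    [IsCyclic G] {d : ℕ} (hd : d ∣ Fintype.card G) : #{g : G | g ^ d = 1} = d := by
  have hd0 : d ≠ 0 := by rintro rfl; exact Fintype.card_ne_zero (zero_dvd_iff.mp hd)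
  rw [← sum_card_orderOf_eq_card_pow_eq_one hd0]
  conv_rhs => rw [← Nat.sum_totient d]
  exact sum_congr rfl fun k hk =>
    IsCyclic.card_orderOf_eq_totient ((Nat.dvd_of_mem_divisors hk).trans hd)

theorem Fintype.sum_eq_add_sum_units {G₀ M : Type*} [GroupWithZero G₀] [Fintype G₀]
    [DecidableEq G₀] [AddCommMonoid M] (f : G₀ → M) : ∑ a, f a = f 0 + ∑ u : G₀ˣ, f u := by
  rw [← add_sum_erase _ _ (mem_univ 0), Finset.sum_subtype _ (p := (· ≠ 0)) (by simp)]
  congr 1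
  exact (Fintype.sum_equiv unitsEquivNeZero _ _ fun _ => rfl).symm

theorem Fintype.one_lt_of_card_eq_sq {α : Type*} [Fintype α] [Nontrivial α] {q : ℕ}
    (h : Fintype.card α = q ^ 2) : 1 < q :=
  (one_lt_pow_iff_of_nonneg (Nat.zero_le _) two_ne_zero).mp (h ▸ Fintype.one_lt_card)

theorem Nat.coprime_sub_one_of_dvd_add_one {q m : ℕ} (hm : Odd m) (hmq : m ∣ q + 1) :
    Nat.Coprime (q - 1) m := by
  refine Nat.coprime_of_dvd fun k hk hkq hkm => ?_
  have h := Nat.le_of_dvd (by omega) (Nat.dvd_sub (hkm.trans hmq) hkq)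
  have hk2 : k = 2 := by have := hk.two_le; omega
  exact hm.not_two_dvd_nat (hk2 ▸ hkm)

theorem ncard_sq_eq_card_add_sum_quadraticChar {F : Type*} [Field F] [Fintype F] [DecidableEq F]
    (hF2 : ringChar F ≠ 2) (f : F → F) :
    ({P : F × F | P.1 ^ 2 = f P.2}.ncard : ℤ) = Fintype.card F + ∑ y, quadraticChar F (f y) := by
  have hfiber (y : F) :
      ∑ x : F, (if x ^ 2 = f y then 1 else 0 : ℕ) = #{x : F | x ^ 2 = f y}.toFinset := by
    rw [Set.toFinset_ofPred, card_filter]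
  rw [Set.ncard_eq_toFinset_card', Set.toFinset_ofPred, card_filter, Fintype.sum_prod_type_right]
  simp only [hfiber]
  push_cast
  rw [sum_congr rfl fun y _ => quadraticChar_card_sqrts hF2 (f y), sum_add_distrib, sum_const,
    card_univ, nsmul_one, add_comm]

section FrobeniusFixedField

variable {F : Type*} [Field F] (p n : ℕ) [ExpChar F p]

variable (F) in
def frobeniusFixedField : Subfield F := (iterateFrobenius F p n).eqLocusField (RingHom.id F)

local notation "q" => p ^ n
local notation "𝔽q" => frobeniusFixedField F p n

theorem mem_frobeniusFixedField {x : F} : x ∈ 𝔽q ↔ x ^ q = x := Iff.rfl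

variable [DecidableEq F] in
instance : DecidablePred (· ∈ 𝔽q) := fun _ => decidable_of_iff _ (mem_frobeniusFixedField p n).symm

theorem val_mem_frobeniusFixedField_iff {u : Fˣ} : (u : F) ∈ 𝔽q ↔ u ^ (q - 1) = 1 := by
  rw [mem_frobeniusFixedField, ← Units.val_pow_eq_pow_val, Units.val_inj,
    ← pow_sub_one_mul (expChar_pow_pos F p n).ne', mul_eq_right]

variable [Fintype F] [DecidableEq F] {p n}

theorem card_frobeniusFixedField (hF : Fintype.card F = q ^ 2) : Fintype.card 𝔽q = q := by
  have hdvd : q - 1 ∣ Fintype.card Fˣ := by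
    simpa [Fintype.card_units, hF] using Nat.sub_dvd_pow_sub_pow q 1 2
  rw [Fintype.card_subtype, card_filter, Fintype.sum_eq_add_sum_units]
  simp only [val_mem_frobeniusFixedField_iff, zero_mem, if_true]
  rw [← card_filter, IsCyclic.card_pow_eq_one_of_dvd hdvd]
  have := expChar_pow_pos F p n
  omega

theorem card_units_frobeniusFixedField (hF : Fintype.card F = q ^ 2) :
    Fintype.card 𝔽qˣ = q - 1 := by
  rw [Fintype.card_units, card_frobeniusFixedField hF]

theorem quadraticChar_eq_one_of_mem_frobeniusFixedField (hF : Fintype.card F = q ^ 2)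
    (hF2 : ringChar F ≠ 2) {a : F} (ha : a ∈ 𝔽q) (ha0 : a ≠ 0) : quadraticChar F a = 1 := by
  have hq : Odd q := by
    have := FiniteField.odd_card_of_char_ne_two hF2
    rw [hF] at this
    exact (Nat.odd_pow_iff two_ne_zero).mp (Nat.odd_iff.mpr this)
  obtain ⟨k, hk⟩ : q - 1 ∣ Fintype.card F / 2 := by
    obtain ⟨j, hj⟩ := hq
    rw [hF, hj, show (2 * j + 1) ^ 2 = 2 * (2 * j * (j + 1)) + 1 by ring]
    exact ⟨j + 1, by rw [Nat.mul_add_div two_pos, Nat.add_sub_cancel]; ring⟩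
  have hpow : (Units.mk0 a ha0) ^ (q - 1) = 1 := (val_mem_frobeniusFixedField_iff p n).mp ha
  rw [quadraticChar_one_iff_isSquare ha0, FiniteField.isSquare_iff hF2 ha0, hk, pow_mul]
  simpa using congrArg (fun u : Fˣ => (u : F) ^ k) hpow

theorem sum_quadraticChar_frobeniusFixedField (hF : Fintype.card F = q ^ 2)
    (hF2 : ringChar F ≠ 2) : ∑ a : 𝔽q, quadraticChar F a = (q : ℤ) - 1 := by
  have hunit (u : 𝔽qˣ) : quadraticChar F (u : F) = 1 :=
    quadraticChar_eq_one_of_mem_frobeniusFixedField hF hF2 (u : 𝔽q).2 (by simp)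
  rw [Fintype.sum_eq_add_sum_units]
  simp only [ZeroMemClass.coe_zero, quadraticChar_zero, hunit, sum_const, card_univ,
    card_units_frobeniusFixedField hF, zero_add, nsmul_eq_mul, mul_one]
  push_cast [(Fintype.one_lt_of_card_eq_sq hF).le]
  ring

theorem sum_quadraticChar_add_of_mem_frobeniusFixedField (hF : Fintype.card F = q ^ 2)
    (hF2 : ringChar F ≠ 2) {c : F} (hc : c ∈ 𝔽q) :
    ∑ a : 𝔽q, quadraticChar F (c + a) = (q : ℤ) - 1 := by
  rw [← sum_quadraticChar_frobeniusFixedField hF hF2]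
  exact Fintype.sum_equiv (Equiv.addLeft ⟨c, hc⟩) _ _ fun _ => rfl

theorem sum_quadraticChar_add_of_notMem_frobeniusFixedField (hF : Fintype.card F = q ^ 2)
    (hF2 : ringChar F ≠ 2) {c : F} (hc : c ∉ 𝔽q) :
    ∑ a : 𝔽q, quadraticChar F (c + a) = -1 := by
  have hbij : Function.Bijective fun ab : 𝔽q × 𝔽q => (ab.1 : F) + ab.2 * c := by
    refine (Fintype.bijective_iff_injective_and_card _).mpr
      ⟨?_, by rw [Fintype.card_prod, card_frobeniusFixedField hF, hF, sq]⟩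
    rintro ⟨a, b⟩ ⟨a', b'⟩ h
    simp only at h
    obtain rfl : b = b' := by
      by_contra hb
      have hb' : (b : F) - b' ≠ 0 := sub_ne_zero.mpr (Subtype.coe_injective.ne hb)
      apply hc
      rw [show c = (a' - a) / (b - b') by field_simp; linear_combination h]
      exact div_mem (sub_mem a'.2 a.2) (sub_mem b.2 b'.2)
    simpa using h
  have hline (u : 𝔽qˣ) :
      ∑ a : 𝔽q, quadraticChar F (a + (u : 𝔽q) * c) = ∑ a : 𝔽q, quadraticChar F (c + a) := by
    refine Fintype.sum_equiv (Units.mulLeft u⁻¹) _ _ fun a => ?_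
    have hu : ((u : 𝔽q) : F) ≠ 0 := by simp
    rw [Units.mulLeft_apply, MulMemClass.coe_mul,
      show (a : F) + u * c = u * (c + ((u⁻¹ : 𝔽qˣ) : F) * a) by
        rw [Units.val_inv_eq_inv_val]; push_cast; field_simp; ring,
      map_mul, quadraticChar_eq_one_of_mem_frobeniusFixedField hF hF2 (u : 𝔽q).2 hu, one_mul]
  -- `F` is the disjoint union of the lines `𝔽q + b c`: in `∑ χ = 0` the line `b = 0` contributes
  -- `q - 1` and each of the `q - 1` others contributes the sum in the goal
  have hsum := quadraticChar_sum_zero hF2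
  rw [← hbij.sum_comp, Fintype.sum_prod_type_right, Fintype.sum_eq_add_sum_units] at hsum
  simp only [ZeroMemClass.coe_zero, zero_mul, add_zero, hline, sum_const, card_univ,
    card_units_frobeniusFixedField hF, nsmul_eq_mul] at hsum
  rw [sum_quadraticChar_frobeniusFixedField hF hF2] at hsum
  have hq := Fintype.one_lt_of_card_eq_sq hF
  push_cast [hq.le] at hsum
  have hq' : (q : ℤ) - 1 ≠ 0 := sub_ne_zero.mpr (by exact_mod_cast hq.ne')
  have : ((q : ℤ) - 1) * (∑ a : 𝔽q, quadraticChar F (c + a) + 1) = 0 := by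
    linear_combination hsum
  simpa [hq', add_eq_zero_iff_eq_neg] using this

theorem sum_units_quadraticChar_mul_add_one (hF : Fintype.card F = q ^ 2)
    (hF2 : ringChar F ≠ 2) (c : F) :
    ∑ v : 𝔽qˣ, quadraticChar F (c * v + 1)
      = ∑ a : 𝔽q, quadraticChar F (c + a) - quadraticChar F c := by
  rw [Fintype.sum_eq_add_sum_units (fun a : 𝔽q => quadraticChar F (c + a)),
    ZeroMemClass.coe_zero, add_zero, add_sub_cancel_left]
  refine Fintype.sum_equiv (Equiv.inv _) _ _ fun v => ?_
  have hv : ((v : 𝔽q) : F) ≠ 0 := by simp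
  rw [Equiv.inv_apply, Units.val_inv_eq_inv_val, Subfield.coe_inv,
    show c * v + 1 = v * (c + (v : F)⁻¹) by field_simp,
    map_mul, quadraticChar_eq_one_of_mem_frobeniusFixedField hF hF2 (v : 𝔽q).2 hv, one_mul]

variable {m : ℕ}

theorem card_units_pow_mem_frobeniusFixedField (hF : Fintype.card F = q ^ 2)
    (hmq : m ∣ q + 1) : #{y : Fˣ | (y : F) ^ m ∈ 𝔽q} = m * (q - 1) := by
  have hdvd : m * (q - 1) ∣ Fintype.card Fˣ := by
    rw [Fintype.card_units, hF, ← one_pow 2, Nat.sq_sub_sq]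
    exact mul_dvd_mul_right hmq _
  simp_rw [← Units.val_pow_eq_pow_val, val_mem_frobeniusFixedField_iff, ← pow_mul]
  exact IsCyclic.card_pow_eq_one_of_dvd hdvd

theorem sub_one_mul_sum_units_quadraticChar_pow_add_one (hF : Fintype.card F = q ^ 2)
    (hF2 : ringChar F ≠ 2) (hm : Odd m) (hmq : m ∣ q + 1) :
    ((q : ℤ) - 1) * ∑ y : Fˣ, quadraticChar F ((y : F) ^ m + 1)
      = ∑ y : Fˣ, (∑ a : 𝔽q, quadraticChar F ((y : F) ^ m + a) - quadraticChar F (y : F)) := by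
  have hcop : (Nat.card 𝔽qˣ).Coprime m := by
    rw [Nat.card_eq_fintype_card, card_units_frobeniusFixedField hF]
    exact Nat.coprime_sub_one_of_dvd_add_one hm hmq
  calc ((q : ℤ) - 1) * ∑ y : Fˣ, quadraticChar F ((y : F) ^ m + 1)
      = ∑ v : 𝔽qˣ, ∑ y : Fˣ, quadraticChar F (((y : F) * (v : 𝔽q)) ^ m + 1) := by
        have htranslate (v : 𝔽qˣ) : ∑ y : Fˣ, quadraticChar F (((y : F) * (v : 𝔽q)) ^ m + 1)
            = ∑ y : Fˣ, quadraticChar F ((y : F) ^ m + 1) :=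
          Fintype.sum_equiv (Equiv.mulRight (Units.map (𝔽q).subtype v)) _ _ fun _ => rfl
        rw [Fintype.sum_congr _ _ htranslate, sum_const, card_univ, card_units_frobeniusFixedField hF, nsmul_eq_mul]
        push_cast [(Fintype.one_lt_of_card_eq_sq hF).le]
        rfl
    _ = ∑ y : Fˣ, ∑ v : 𝔽qˣ, quadraticChar F ((y : F) ^ m * ((v ^ m : 𝔽qˣ) : F) + 1) := by
        rw [Finset.sum_comm]
        simp [mul_pow]
    _ = ∑ y : Fˣ, ∑ v : 𝔽qˣ, quadraticChar F ((y : F) ^ m * v + 1) :=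
        Fintype.sum_congr _ _ fun y => (powCoprime hcop).sum_comp
          fun v => quadraticChar F ((y : F) ^ m * ((v : 𝔽q) : F) + 1)
    _ = _ := by
        simp only [sum_units_quadraticChar_mul_add_one hF hF2, map_pow,
          ← MulChar.pow_apply' _ hm.pos.ne', (quadraticChar_isQuadratic F).pow_odd hm]

theorem sum_units_quadraticChar_pow_add_one (hF : Fintype.card F = q ^ 2)
    (hF2 : ringChar F ≠ 2) (hm : Odd m) (hmq : m ∣ q + 1) :
    ∑ y : Fˣ, quadraticChar F ((y : F) ^ m + 1) = m * q - q - 1 := by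
  have hline (y : Fˣ) : ∑ a : 𝔽q, quadraticChar F ((y : F) ^ m + a)
      = q * (if (y : F) ^ m ∈ 𝔽q then 1 else 0) - 1 := by
    split_ifs with h
    · rw [sum_quadraticChar_add_of_mem_frobeniusFixedField hF hF2 h]; ring
    · rw [sum_quadraticChar_add_of_notMem_frobeniusFixedField hF hF2 h]; ring
  have hzero : ∑ y : Fˣ, quadraticChar F y = 0 := by
    simpa using (Fintype.sum_eq_add_sum_units (quadraticChar F)).symm.trans
      (quadraticChar_sum_zero hF2)
  have key := sub_one_mul_sum_units_quadraticChar_pow_add_one hF hF2 hm hmq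
  simp only [hline, sum_sub_distrib, ← mul_sum, sum_boole, hzero, sum_const, card_univ,
    card_units_pow_mem_frobeniusFixedField hF hmq, Fintype.card_units, hF] at key
  have hq := Fintype.one_lt_of_card_eq_sq hF
  push_cast [hq.le, Nat.one_le_pow 2 q (by omega), nsmul_eq_mul] at key
  refine mul_left_cancel₀ (sub_ne_zero.mpr (by exact_mod_cast hq.ne') : (q : ℤ) - 1 ≠ 0) ?_
  linear_combination key

theorem sum_quadraticChar_pow_add_one (hF : Fintype.card F = q ^ 2) (hF2 : ringChar F ≠ 2)
    (hm : Odd m) (hmq : m ∣ q + 1) :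
    ∑ y : F, quadraticChar F (y ^ m + 1) = (m - 1) * q := by
  rw [Fintype.sum_eq_add_sum_units (fun y => quadraticChar F (y ^ m + 1)),
    sum_units_quadraticChar_pow_add_one hF hF2 hm hmq, zero_pow hm.pos.ne', zero_add, map_one]
  ring

end FrobeniusFixedField

theorem stmt7_general (p n q g : ℕ) (hp : p.Prime) (hodd : p ≠ 2) (hq : q = p ^ n)
    (hdvd : (2 * g + 1) ∣ (q + 1))
    {F : Type*} [Field F] [Fintype F] (hF : Fintype.card F = q ^ 2) :
    {P : F × F | P.1 ^ 2 = P.2 ^ (2 * g + 1) + 1}.ncard = q ^ 2 + 2 * g * q := by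
  classical
  subst hq
  have : Fact p.Prime := ⟨hp⟩
  have : CharP F p := charP_of_card_eq_prime_pow (f := n * 2) (by rw [hF, pow_mul])
  have hF2 : ringChar F ≠ 2 := by rwa [ringChar.eq F p]
  have hcount := ncard_sq_eq_card_add_sum_quadraticChar hF2 fun y => y ^ (2 * g + 1) + 1
  rw [sum_quadraticChar_pow_add_one hF hF2 (odd_two_mul_add_one g) hdvd, hF] at hcount
  push_cast at hcount
  zify
  linear_combination hcount

theorem stmt7 (p n q g : ℕ) (hp : p.Prime) (hodd : p ≠ 2) (hq : q = p ^ n) (hn : 1 ≤ n)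
    (hg : 1 ≤ g) (hdvd : (2 * g + 1) ∣ (q + 1))
    {F : Type*} [Field F] [Fintype F] (hF : Fintype.card F = q ^ 2) :
    {P : F × F | P.1 ^ 2 = P.2 ^ (2 * g + 1) + 1}.ncard = q ^ 2 + 2 * g * q :=
  stmt7_general p n q g hp hodd hq hdvd hF
end

section
/- Let q be a prime power, r ≥ 2, and b ∈ F_{q^r}^* with b ≠ 1; set γ = b^{(q^r−1)/(q−1)}. Let N = {(x, y) ∈ F_{q^r} × F_{q^r} : x^{(q^r−1)/(q−1)} = y^{q^{r−1}} + y^{q^{r−2}} + ⋯ + y^q + y} and let Ω = {(0, y) ∈ N} be its set of points with x = 0. Then the map σ(x, y) = (b x, γ y) is a bijection of N onto itself whose order equals the multiplicative order of b; σ fixes (0, 0); every point of Ω ∖ {(0, 0)} has σ-orbit of cardinality equal to the multiplicative order of γ (so Ω ∖ {(0,0)} splits into (q^{r−1} − 1)/ord(γ) such orbits); and every point of N with x ≠ 0 has σ-orbit of cardinality equal to the multiplicative order of b. -/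
open Function Polynomial

section Orbit

variable {α : Type*} {f : α → α} {P Q : α}

lemma mem_fnOrbit_self : P ∈ fnOrbit f P := ⟨0, 0, rfl⟩

lemma fnOrbit_subset_of_mem (h : Q ∈ fnOrbit f P) : fnOrbit f Q ⊆ fnOrbit f P := by
  obtain ⟨j, k, h⟩ := h
  rintro R ⟨j', k', h'⟩
  refine ⟨j' + j, k + k', ?_⟩
  rw [iterate_add_apply, h, ← iterate_add_apply, add_comm, iterate_add_apply, h',
    ← iterate_add_apply]

lemma fnOrbit_eq_of_mem (h : Q ∈ fnOrbit f P) : fnOrbit f Q = fnOrbit f P := by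
  refine (fnOrbit_subset_of_mem h).antisymm (fnOrbit_subset_of_mem ?_)
  obtain ⟨j, k, h⟩ := h
  exact ⟨k, j, h.symm⟩

lemma fnOrbit_eq_range_iterate {n : ℕ} (hn : 0 < n) (hf : f^[n] = id) (P : α) :
    fnOrbit f P = Set.range fun m => f^[m] P := by
  ext Q
  refine ⟨fun ⟨j, k, h⟩ => ⟨n * k - k + j, ?_⟩, fun ⟨m, hm⟩ => ⟨m, 0, hm⟩⟩
  have hQ : f^[n * k] Q = Q := by rw [iterate_mul, hf, iterate_id, id]
  change f^[n * k - k + j] P = Q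
  rw [iterate_add_apply, h, ← iterate_add_apply,
    Nat.sub_add_cancel (Nat.le_mul_of_pos_left k hn), hQ]

lemma fnOrbit_subset_of_mapsTo {n : ℕ} (hn : 0 < n) (hf : f^[n] = id) {S : Set α}
    (hS : Set.MapsTo f S S) (hP : P ∈ S) : fnOrbit f P ⊆ S := by
  rw [fnOrbit_eq_range_iterate hn hf]
  rintro _ ⟨m, rfl⟩
  exact hS.iterate m hP

lemma ncard_fnOrbits_mul {S : Set α} (hS : S.Finite) (hinv : ∀ P ∈ S, fnOrbit f P ⊆ S)
    {d : ℕ} (hd : ∀ P ∈ S, (fnOrbit f P).ncard = d) :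
    {O | ∃ P ∈ S, O = fnOrbit f P}.ncard * d = S.ncard := by
  classical
  have horbits : {O | ∃ P ∈ S, O = fnOrbit f P} = hS.toFinset.image (fnOrbit f) := by
    ext O
    simp [eq_comm]
  have hfiber : ∀ O ∈ hS.toFinset.image (fnOrbit f),
      (hS.toFinset.filter (fnOrbit f · = O)).card = d := by
    simp only [Finset.mem_image, Set.Finite.mem_toFinset]
    rintro O ⟨P, hP, rfl⟩
    rw [← hd P hP, ← Set.ncard_coe_finset]
    congr 1
    ext Q
    simp only [Finset.coe_filter, Set.Finite.mem_toFinset, Set.mem_ofPred_eq]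
    exact ⟨fun ⟨_, hQ⟩ => hQ ▸ mem_fnOrbit_self,
      fun hQ => ⟨hinv P hP hQ, fnOrbit_eq_of_mem hQ⟩⟩
  rw [horbits, Set.ncard_coe_finset, Set.ncard_eq_toFinset_card S hS,
    Finset.card_eq_sum_card_image (fnOrbit f), Finset.sum_congr rfl hfiber, Finset.sum_const,
    smul_eq_mul]

end Orbit

section MulLeft

variable {M : Type*} [Monoid M]

lemma isOrderOf_mul_left (g : M) : IsOrderOf (g * ·) (orderOf g) := by
  refine ⟨funext fun P => by simp [pow_orderOf_eq_one], fun k hk hid => ?_⟩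
  have hgk : g ^ k = 1 := by simpa using congrFun hid 1
  exact Nat.le_of_dvd hk (orderOf_dvd_of_pow_eq_one hgk)

lemma fnOrbit_mul_left {g : M} (hg : IsOfFinOrder g) (P : M) :
    fnOrbit (g * ·) P = Set.range fun m => g ^ m * P := by
  simp [fnOrbit_eq_range_iterate hg.orderOf_pos (isOrderOf_mul_left g).1]

lemma ncard_range_pow {a : M} (ha : IsOfFinOrder a) :
    (Set.range (a ^ · : ℕ → M)).ncard = orderOf a := by
  rw [← Submonoid.coe_powers, ← Nat.card_coe_set_eq, SetLike.coe_sort_coe,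
    ← Nat.card_congr (finEquivPowers ha), Nat.card_fin]

lemma pow_pow_eq_self_of_pow_eq_self {c : M} {q : ℕ} (hc : c ^ q = c) :
    ∀ i : ℕ, c ^ q ^ i = c
  | 0 => pow_one c
  | i + 1 => by rw [pow_succ, pow_mul, pow_pow_eq_self_of_pow_eq_self hc i, hc]

lemma orderOf_mk_pow (b : M) (s : ℕ) : orderOf (b, b ^ s) = orderOf b := by
  rw [Prod.orderOf_mk, Nat.lcm_eq_left_iff_dvd.mpr (orderOf_pow_dvd s)]

end MulLeft

section MulLeftWithZero

variable {M₀ : Type*} [MonoidWithZero M₀] [IsRightCancelMulZero M₀]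

lemma ncard_fnOrbit_mul_left_of_fst_ne_zero {b : M₀} (hb : IsOfFinOrder b) (s : ℕ)
    {P : M₀ × M₀} (hP : P.1 ≠ 0) : (fnOrbit ((b, b ^ s) * ·) P).ncard = orderOf b := by
  have horbit : (Set.range fun m => (b, b ^ s) ^ m * P)
      = (fun u => (u * P.1, u ^ s * P.2)) '' Set.range (b ^ ·) := by
    rw [← Set.range_comp]
    ext
    simp [Prod.mul_def, ← pow_mul, mul_comm s]
  rw [fnOrbit_mul_left (hb.prod_mk hb.pow), horbit, ← ncard_range_pow hb]
  exact Set.ncard_image_of_injective _ fun u v h => mul_right_cancel₀ hP (congrArg Prod.fst h)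

lemma ncard_fnOrbit_mul_left_zero_mk {b c : M₀} (hg : IsOfFinOrder (b, c)) {y : M₀}
    (hy : y ≠ 0) : (fnOrbit ((b, c) * ·) (0, y)).ncard = orderOf c := by
  have horbit : (Set.range fun m => (b, c) ^ m * (0, y))
      = (fun u => (0, u * y)) '' Set.range (c ^ ·) := by
    rw [← Set.range_comp]
    ext
    simp
  rw [fnOrbit_mul_left hg, horbit, ← ncard_range_pow hg.snd]
  exact Set.ncard_image_of_injective _ fun u v h => mul_right_cancel₀ hy (congrArg Prod.snd h)

end MulLeftWithZero

section FrobeniusTrace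

variable {F : Type*} [Field F] {q r : ℕ}

/-- For `#F = q ^ r` this is the trace of `F` over its subfield with `q` elements. -/
def frobTrace (q r : ℕ) (y : F) : F := ∑ i ∈ Finset.range r, y ^ q ^ i

lemma frobTrace_mul_of_pow_eq_self {c : F} (hc : c ^ q = c) (y : F) :
    frobTrace q r (c * y) = c * frobTrace q r y := by
  simp only [frobTrace, Finset.mul_sum, mul_pow, pow_pow_eq_self_of_pow_eq_self hc]

lemma ncard_setOf_eval_eq_zero_le {g : F[X]} (hg : g ≠ 0) :
    {x | g.eval x = 0}.ncard ≤ g.natDegree := by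
  convert g.ncard_rootSet_le F
  ext x
  simp [mem_rootSet, hg]

lemma ncard_setOf_pow_eq_self_le (hq : 1 < q) : {z : F | z ^ q = z}.ncard ≤ q := by
  convert ncard_setOf_eval_eq_zero_le (FiniteField.X_pow_card_sub_X_ne_zero F hq) using 1
  · simp [sub_eq_zero]
  · exact (FiniteField.X_pow_card_sub_X_natDegree_eq F hq).symm

lemma ncard_setOf_frobTrace_eq_zero_le (hq : 1 < q) (hr : r ≠ 0) :
    {y : F | frobTrace q r y = 0}.ncard ≤ q ^ (r - 1) := by
  let g : F[X] := ∑ i ∈ Finset.range r, X ^ q ^ i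
  have hcoeff : g.coeff 1 = 1 := by
    simp [g, finsetSum_coeff, coeff_X_pow, eq_comm (a := 1), hq.ne', hr]
  have hdeg : g.natDegree ≤ q ^ (r - 1) :=
    natDegree_sum_le_of_forall_le _ _ fun i hi => (natDegree_X_pow _).le.trans <|
      Nat.pow_le_pow_right (by omega) (by rw [Finset.mem_range] at hi; omega)
  calc _ = {x | g.eval x = 0}.ncard := by simp [g, eval_finsetSum, frobTrace]
    _ ≤ g.natDegree := ncard_setOf_eval_eq_zero_le fun h => by simp [h] at hcoeff
    _ ≤ q ^ (r - 1) := hdeg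

lemma one_lt_of_card_eq_pow [Fintype F] (hF : Fintype.card F = q ^ r) : 1 < q := by
  have := hF ▸ Fintype.one_lt_card (α := F)
  by_contra! hq
  exact this.not_ge (pow_le_one₀ (Nat.zero_le q) hq)

variable {p n : ℕ} [Fact p.Prime] [CharP F p]

lemma frobTrace_add (hq : q = p ^ n) (x y : F) :
    frobTrace q r (x + y) = frobTrace q r x + frobTrace q r y := by
  simp only [frobTrace, ← Finset.sum_add_distrib, hq, ← pow_mul, add_pow_char_pow]

variable [Fintype F]

lemma frobTrace_pow (hq : q = p ^ n) (hF : Fintype.card F = q ^ r) (y : F) :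
    frobTrace q r y ^ q = frobTrace q r y := by
  have hshift := Finset.sum_range_succ' (fun i => y ^ q ^ i) r
  rw [Finset.sum_range_succ, ← hF, FiniteField.pow_card, pow_zero, pow_one] at hshift
  calc frobTrace q r y ^ q = ∑ i ∈ Finset.range r, (y ^ q ^ i) ^ q := by
        rw [frobTrace, hq, sum_pow_char_pow]
    _ = ∑ i ∈ Finset.range r, y ^ q ^ (i + 1) := by simp only [← pow_mul, ← pow_succ]
    _ = frobTrace q r y := (add_right_cancel hshift).symm

theorem ncard_setOf_frobTrace_eq_zero (hq : q = p ^ n) (hr : r ≠ 0)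
    (hF : Fintype.card F = q ^ r) : {y : F | frobTrace q r y = 0}.ncard = q ^ (r - 1) := by
  have hq1 := one_lt_of_card_eq_pow hF
  let T : F →+ F := AddMonoidHom.mk' (frobTrace q r) (frobTrace_add hq)
  have hrange : Nat.card T.range ≤ q := by
    refine (Nat.card_mono (Set.toFinite _) ?_).trans ((Nat.card_coe_set_eq _).trans_le
      (ncard_setOf_pow_eq_self_le hq1))
    rintro _ ⟨y, rfl⟩
    exact frobTrace_pow hq hF y
  have hcard : Nat.card T.ker * Nat.card T.range = q ^ (r - 1) * q := by
    rw [← AddSubgroup.index_ker, AddSubgroup.card_mul_index, Nat.card_eq_fintype_card, hF,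
      ← pow_succ, Nat.sub_add_cancel (Nat.one_le_iff_ne_zero.mpr hr)]
  refine (ncard_setOf_frobTrace_eq_zero_le hq1 hr).antisymm ?_
  rw [← Nat.card_coe_set_eq]
  refine Nat.le_of_mul_le_mul_right ?_ (by omega : 0 < q)
  calc q ^ (r - 1) * q = Nat.card T.ker * Nat.card T.range := hcard.symm
    _ ≤ Nat.card T.ker * q := Nat.mul_le_mul_left _ hrange

end FrobeniusTrace

section NormTraceCurve

variable {F : Type*} [Field F] {q r : ℕ}

def normTraceCurve (q r : ℕ) : Set (F × F) :=
  {P | P.1 ^ (∑ i ∈ Finset.range r, q ^ i) = frobTrace q r P.2}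

lemma ncard_axis_diff_origin (hq : 1 < q) (hr : r ≠ 0) :
    ({P | P ∈ normTraceCurve q r ∧ P.1 = 0} \ {((0 : F), (0 : F))}).ncard
      = {y : F | frobTrace q r y = 0}.ncard - 1 := by
  have hs : ∑ i ∈ Finset.range r, q ^ i ≠ 0 :=
    (Finset.sum_pos (fun i _ => pow_pos (by omega) i) (Finset.nonempty_range_iff.mpr hr)).ne'
  have haxis : {P | P ∈ normTraceCurve q r ∧ P.1 = 0} \ {((0 : F), (0 : F))}
      = Prod.mk 0 '' ({y : F | frobTrace q r y = 0} \ {0}) := by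
    ext ⟨x, y⟩
    by_cases hx : x = 0 <;> simp [normTraceCurve, hx, zero_pow hs, eq_comm (a := (0 : F))]
  have hzero : (0 : F) ∈ {y : F | frobTrace q r y = 0} :=
    Finset.sum_eq_zero fun i _ => zero_pow (pow_ne_zero i (by omega))
  rw [haxis, Set.ncard_image_of_injective _ (Prod.mk_right_injective 0),
    Set.ncard_sdiff_singleton_of_mem hzero]

variable [Fintype F]

lemma norm_pow_eq_self (hF : Fintype.card F = q ^ r) {b : F} (hb : b ≠ 0) :
    (b ^ ∑ i ∈ Finset.range r, q ^ i) ^ q = b ^ ∑ i ∈ Finset.range r, q ^ i := by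
  obtain ⟨q, rfl⟩ : ∃ q', q = q' + 1 :=
    Nat.exists_eq_add_one.mpr (one_lt_of_card_eq_pow hF).le
  have hgeom := geom_sum_mul_add q r
  have hunit : b ^ ((∑ i ∈ Finset.range r, (q + 1) ^ i) * q) = 1 := by
    rw [← FiniteField.pow_card_sub_one_eq_one b hb, hF]
    congr 1
    omega
  rw [← pow_mul, mul_add_one, pow_add, hunit, one_mul]

lemma mapsTo_mul_left_normTraceCurve (hF : Fintype.card F = q ^ r) {b : F} (hb : b ≠ 0) :
    Set.MapsTo ((b, b ^ ∑ i ∈ Finset.range r, q ^ i) * ·) (normTraceCurve q r)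
      (normTraceCurve q r) := by
  intro P hP
  change (b * P.1) ^ _ = frobTrace q r (_ * P.2)
  rw [mul_pow, hP, frobTrace_mul_of_pow_eq_self (norm_pow_eq_self hF hb)]

lemma bijOn_mul_left_normTraceCurve (hF : Fintype.card F = q ^ r) {b : F} (hb : b ≠ 0) :
    Set.BijOn ((b, b ^ ∑ i ∈ Finset.range r, q ^ i) * ·) (normTraceCurve q r)
      (normTraceCurve q r) := by
  have hunit : IsUnit (b, b ^ ∑ i ∈ Finset.range r, q ^ i) := by
    simp [Prod.isUnit_iff, hb]
  exact ((Set.toFinite _).injOn_iff_bijOn_of_mapsTo (mapsTo_mul_left_normTraceCurve hF hb)).mp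
    hunit.mul_right_injective.injOn

variable {p n : ℕ} [Fact p.Prime] [CharP F p]

lemma ncard_fnOrbits_axis_mul (hq : q = p ^ n) (hr : r ≠ 0) (hF : Fintype.card F = q ^ r)
    {b : F} (hb : b ≠ 0) :
    {O | ∃ P ∈ {P | P ∈ normTraceCurve q r ∧ P.1 = 0}, P ≠ ((0 : F), (0 : F)) ∧
        O = fnOrbit ((b, b ^ ∑ i ∈ Finset.range r, q ^ i) * ·) P}.ncard
      * orderOf (b ^ ∑ i ∈ Finset.range r, q ^ i) = q ^ (r - 1) - 1 := by
  set γ := b ^ ∑ i ∈ Finset.range r, q ^ i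
  set S := {P | P ∈ normTraceCurve q r ∧ P.1 = 0} \ {((0 : F), (0 : F))}
  have hbF : IsOfFinOrder b := (isUnit_iff_ne_zero.mpr hb).isOfFinOrder
  have hg : IsOfFinOrder (b, γ) := hbF.prod_mk hbF.pow
  have hmaps : Set.MapsTo ((b, γ) * ·) S S := by
    rintro ⟨x, y⟩ ⟨⟨hP, rfl : x = 0⟩, hne⟩
    refine ⟨⟨mapsTo_mul_left_normTraceCurve hF hb hP, mul_zero b⟩, ?_⟩
    simpa [γ, hb] using hne
  have horbits : {O | ∃ P ∈ {P | P ∈ normTraceCurve q r ∧ P.1 = 0}, P ≠ ((0 : F), (0 : F)) ∧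
      O = fnOrbit ((b, γ) * ·) P} = {O | ∃ P ∈ S, O = fnOrbit ((b, γ) * ·) P} := by
    ext O
    simp [S, and_assoc]
  rw [horbits, ncard_fnOrbits_mul (Set.toFinite S)
      (fun P => fnOrbit_subset_of_mapsTo hg.orderOf_pos (isOrderOf_mul_left _).1 hmaps)
      (fun ⟨x, y⟩ ⟨⟨_, (hx : x = 0)⟩, hne⟩ => hx ▸ ncard_fnOrbit_mul_left_zero_mk hg
        (by simpa [hx] using hne)),
    ncard_axis_diff_origin (one_lt_of_card_eq_pow hF) hr, ncard_setOf_frobTrace_eq_zero hq hr hF]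

end NormTraceCurve

theorem stmt11_general (p nn q r : ℕ) (hp : p.Prime) (hq : q = p ^ nn) (hr : 2 ≤ r)
    {F : Type*} [Field F] [Fintype F] (hF : Fintype.card F = q ^ r)
    (b : F) (hb0 : b ≠ 0)
    (γ : F) (hγ : γ = b ^ (∑ i ∈ Finset.range r, q ^ i))
    (N : Set (F × F)) (hN : N = {P : F × F | P.1 ^ (∑ i ∈ Finset.range r, q ^ i)
      = ∑ i ∈ Finset.range r, P.2 ^ q ^ i})
    (Ω : Set (F × F)) (hΩ : Ω = {P : F × F | P ∈ N ∧ P.1 = 0})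
    (σ : F × F → F × F) (hσ : σ = fun P => (b * P.1, γ * P.2)) :
    Set.BijOn σ N N ∧
    IsOrderOf σ (orderOf b) ∧
    σ ((0 : F), (0 : F)) = ((0 : F), (0 : F)) ∧
    (∀ P ∈ Ω, P ≠ ((0 : F), (0 : F)) → (fnOrbit σ P).ncard = orderOf γ) ∧
    {O : Set (F × F) | ∃ P ∈ Ω, P ≠ ((0 : F), (0 : F)) ∧ O = fnOrbit σ P}.ncard
      = (q ^ (r - 1) - 1) / orderOf γ ∧
    ∀ P ∈ N, P.1 ≠ 0 → (fnOrbit σ P).ncard = orderOf b := by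
  have := Fact.mk hp
  have : CharP F p := charP_of_card_eq_prime_pow (f := nn * r) (by rw [hF, hq, pow_mul])
  obtain rfl : σ = ((b, γ) * ·) := hσ
  obtain rfl : N = normTraceCurve q r := hN
  subst hΩ hγ
  have hbF : IsOfFinOrder b := (isUnit_iff_ne_zero.mpr hb0).isOfFinOrder
  have hg : IsOfFinOrder (b, b ^ ∑ i ∈ Finset.range r, q ^ i) := hbF.prod_mk hbF.pow
  refine ⟨bijOn_mul_left_normTraceCurve hF hb0, orderOf_mk_pow b _ ▸ isOrderOf_mul_left _,
    by simp, ?_, ?_, fun P _ hP => ncard_fnOrbit_mul_left_of_fst_ne_zero hbF _ hP⟩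
  · rintro ⟨x, y⟩ ⟨-, rfl : x = 0⟩ hne
    exact ncard_fnOrbit_mul_left_zero_mk hg (by simpa using hne)
  · rw [← ncard_fnOrbits_axis_mul hq (by omega) hF hb0, Nat.mul_div_cancel _ hg.snd.orderOf_pos]

theorem stmt11 (p nn q r : ℕ) (hp : p.Prime) (hq : q = p ^ nn) (hn : 1 ≤ nn) (hr : 2 ≤ r)
    {F : Type*} [Field F] [Fintype F] (hF : Fintype.card F = q ^ r)
    (b : F) (hb0 : b ≠ 0) (hb1 : b ≠ 1)
    (γ : F) (hγ : γ = b ^ (∑ i ∈ Finset.range r, q ^ i))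
    (N : Set (F × F)) (hN : N = {P : F × F | P.1 ^ (∑ i ∈ Finset.range r, q ^ i)
      = ∑ i ∈ Finset.range r, P.2 ^ q ^ i})
    (Ω : Set (F × F)) (hΩ : Ω = {P : F × F | P ∈ N ∧ P.1 = 0})
    (σ : F × F → F × F) (hσ : σ = fun P => (b * P.1, γ * P.2)) :
    Set.BijOn σ N N ∧
    IsOrderOf σ (orderOf b) ∧
    σ ((0 : F), (0 : F)) = ((0 : F), (0 : F)) ∧
    (∀ P ∈ Ω, P ≠ ((0 : F), (0 : F)) → (fnOrbit σ P).ncard = orderOf γ) ∧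
    {O : Set (F × F) | ∃ P ∈ Ω, P ≠ ((0 : F), (0 : F)) ∧ O = fnOrbit σ P}.ncard
      = (q ^ (r - 1) - 1) / orderOf γ ∧
    ∀ P ∈ N, P.1 ≠ 0 → (fnOrbit σ P).ncard = orderOf b :=
  stmt11_general p nn q r hp hq hr hF b hb0 γ hγ N hN Ω hΩ σ hσ
end

section
/- Let q be a power of an odd prime p, and let b, c ∈ F_{q^2} with c^q + c = b^{q+1} and (b, c) ≠ (0, 0). Let H = {(x, y) ∈ F_{q^2} × F_{q^2} : y^q + y = x^{q+1}}. Then the map ψ(x, y) = (x + b, b^q x + y + c) is a bijection of H onto itself of order p, and ψ acts semiregularly on H: every ψ-orbit on H has cardinality exactly p (equivalently, ψ^k has no fixed point in H for any k not divisible by p). -/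
theorem stmt14 (p nn q : ℕ) (hp : p.Prime) (hodd : p ≠ 2) (hq : q = p ^ nn) (hn : 1 ≤ nn)
    {F : Type*} [Field F] [Fintype F] (hF : Fintype.card F = q ^ 2)
    (b c : F) (hbc : c ^ q + c = b ^ (q + 1)) (hne : (b, c) ≠ ((0 : F), (0 : F)))
    (H : Set (F × F)) (hH : H = {P : F × F | P.2 ^ q + P.2 = P.1 ^ (q + 1)})
    (ψ : F × F → F × F) (hψ : ψ = fun P => (P.1 + b, b ^ q * P.1 + P.2 + c)) :
    Set.BijOn ψ H H ∧
    IsOrderOf ψ p ∧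
    ∀ P ∈ H, (fnOrbit ψ P).ncard = p := by
  classical
  have hchar : CharP F p := by
    have := ringChar.charP F
    obtain ⟨m, hr, hcard⟩ := FiniteField.card F (ringChar F)
    have : ringChar F = p := by
      have hd : ringChar F ∣ p ^ (nn * 2) := by
        rw [pow_mul, ← hq, ← hF, hcard]
        exact dvd_pow_self _ (m.2.ne')
      exact ((Nat.prime_dvd_prime_iff_eq hr hp).mp (hr.dvd_of_dvd_pow hd))
    rwa [this] at ‹CharP F (ringChar F)›
  have hq0 : q ≠ 0 := by rw [hq]; exact pow_ne_zero _ hp.pos.ne'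
  -- Frobenius additivity
  have hfrob : ∀ x y : F, (x + y) ^ q = x ^ q + y ^ q := by
    intro x y
    have : Fact p.Prime := ⟨hp⟩
    rw [hq]
    exact add_pow_char_pow x y p nn
  have hqq : ∀ a : F, (a ^ q) ^ q = a := by
    intro a
    rw [← pow_mul, ← sq, ← hF]
    exact FiniteField.pow_card a
  -- closed form for iterates
  have key : ∀ (k : ℕ) (P : F × F), ψ^[k] P
      = (P.1 + k * b, k * b ^ q * P.1 + P.2 + k * c + (k.choose 2) * b ^ (q + 1)) := by
    intro k
    induction k with
    | zero => intro P; simp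
    | succ k ih =>
      intro P
      rw [Function.iterate_succ_apply', ih, hψ]
      refine Prod.ext ?_ ?_
      · push_cast; ring
      · simp only
        rw [Nat.choose_succ_succ, Nat.choose_one_right]
        push_cast
        ring
  -- fixed point free
  have hfpf : ∀ k : ℕ, ¬ p ∣ k → ∀ P : F × F, ψ^[k] P ≠ P := by
    intro k hk P heq
    rw [key] at heq
    have h1 : (k : F) * b = 0 := by
      have := congrArg Prod.fst heq
      simp only at this
      linear_combination this
    have hkF : (k : F) ≠ 0 := fun h => hk ((CharP.cast_eq_zero_iff F p k).mp h)
    have hb : b = 0 := by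
      rcases mul_eq_zero.mp h1 with h | h
      · exact absurd h hkF
      · exact h
    have hc : c ≠ 0 := by
      intro h; exact hne (by rw [hb, h])
    have h2 := congrArg Prod.snd heq
    simp only [hb, zero_pow hq0, mul_zero, zero_mul, mul_one, add_zero, zero_add] at h2
    -- h2 : k * 0 * P.1 + P.2 + k * c + choose * 0 = P.2  (after simp)
    have : (k : F) * c = 0 := by linear_combination h2
    rcases mul_eq_zero.mp this with h | h
    · exact hkF h
    · exact hc h
  have hpp : ψ^[p] = id := by
    funext P
    rw [key]
    have hp0 : (p : F) = 0 := CharP.cast_eq_zero F p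
    have hch : ((p.choose 2 : ℕ) : F) = 0 := by
      obtain ⟨t, ht⟩ := hp.dvd_choose_self (by norm_num) (lt_of_le_of_ne hp.two_le (Ne.symm hodd))
      rw [ht]; push_cast; rw [hp0]; ring
    rw [hp0, hch]
    simp
  have hinj : Function.Injective ψ := by
    intro P Q h
    rw [hψ] at h
    simp only [Prod.mk.injEq] at h
    obtain ⟨h1, h2⟩ := h
    have e1 : P.1 = Q.1 := by linear_combination h1
    have e2 : P.2 = Q.2 := by
      rw [e1] at h2; linear_combination h2
    exact Prod.ext e1 e2
  have hmaps : Set.MapsTo ψ H H := by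
    intro P hP
    rw [hH] at hP ⊢
    simp only [Set.mem_setOf_eq] at hP ⊢
    rw [hψ]
    simp only
    rw [hfrob, hfrob, mul_pow, hqq]
    calc b * P.1 ^ q + P.2 ^ q + c ^ q + (b ^ q * P.1 + P.2 + c)
        = b * P.1 ^ q + b ^ q * P.1 + (P.2 ^ q + P.2) + (c ^ q + c) := by ring
      _ = b * P.1 ^ q + b ^ q * P.1 + P.1 ^ (q+1) + b ^ (q+1) := by rw [hP, hbc]
      _ = (P.1 + b) ^ (q+1) := by
          conv_rhs => rw [pow_succ, hfrob]
          ring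
  have hppos : 0 < p := hp.pos
  constructor
  · refine ⟨hmaps, hinj.injOn, ?_⟩
    intro Q hQ
    refine ⟨ψ^[p-1] Q, hmaps.iterate (p-1) hQ, ?_⟩
    have h := Function.iterate_succ_apply' ψ (p-1) Q
    have hps : (p - 1).succ = p := by omega
    rw [hps] at h
    rw [← h, hpp, id_eq]
  constructor
  · refine ⟨hpp, ?_⟩
    intro k hk hkid
    by_contra hlt
    push_neg at hlt
    have hndvd : ¬ p ∣ k := fun h => absurd (Nat.le_of_dvd hk h) (not_le.mpr hlt)
    exact hfpf k hndvd (0, 0) (by simp [hkid])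
  · intro P _
    have horb : fnOrbit ψ P = ↑((Finset.range p).image fun i => ψ^[i] P) := by
      ext Q
      simp only [fnOrbit, Set.mem_setOf_eq, Finset.coe_image, Finset.coe_range,
        Set.mem_image, Set.mem_Iio]
      constructor
      · rintro ⟨j, k, hjk⟩
        refine ⟨(p * (k + 1) - k + j) % p, Nat.mod_lt _ hppos, ?_⟩
        have hid : ∀ t : ℕ, ψ^[p * t] = id := by
          intro t; rw [Function.iterate_mul, hpp, Function.iterate_id]
        have hmod : ∀ n : ℕ, ψ^[n] = ψ^[n % p] := by
          intro n
          conv_lhs => rw [← Nat.mod_add_div n p]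
          rw [Function.iterate_add, hid]
          simp
        set m := p * (k + 1) - k with hm
        have hmk : m + k = p * (k + 1) := by
          rw [hm]
          have : k ≤ p * (k + 1) := by nlinarith
          omega
        have : ψ^[m + j] P = Q := by
          rw [Function.iterate_add_apply, hjk, ← Function.iterate_add_apply, hmk, hid]
          rfl
        rw [← this, hmod (m + j)]
      · rintro ⟨i, _, hi⟩
        exact ⟨i, 0, by rw [hi]; rfl⟩
    rw [horb, Set.ncard_coe_finset]
    rw [Finset.card_image_of_injOn, Finset.card_range]
    have habs : ∀ i j : ℕ, i < j → j < p → ψ^[i] P = ψ^[j] P → False := by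
      intro i j hlt hjp hij
      have hinj' : Function.Injective (ψ^[i]) := hinj.iterate i
      have hfix : ψ^[j - i] P = P := by
        apply hinj'
        rw [← Function.iterate_add_apply, Nat.add_sub_cancel' hlt.le]
        exact hij.symm
      exact hfpf (j - i) (fun h => absurd (Nat.le_of_dvd (by omega) h) (by omega)) P hfix
    intro i hi j hj hij
    simp only [Finset.mem_coe, Finset.mem_range] at hi hj
    dsimp only at hij
    by_contra hne'
    rcases Nat.lt_or_ge i j with h | h
    · exact habs i j h hj hij
    · exact habs j i (by omega) hi hij.symm
end
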